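/- Let α be a nonempty cyclically reduced word and γ a nonempty word over the same alphabet. Suppose γ is a factor of α^n for some n ≥ 1 and the formal inverse γ⁻¹ is a factor of α^m for some m ≥ 1. Then 2·|γ| < |α|, where |·| denotes the length of a word. -/

import Mathlib

/-!
Read `a` as a cyclic word indexed by `ZMod |a|`. If `γ` occurs at position `i` and `γ⁻¹` at
position `j`, then for `k < |γ|` the letter at `j + k` is the inverse of the letter at `c - k`,
where `c = i + |γ| - 1`. At the midpoint `k = ⌊(c - j) / 2⌋` of this reflection, which lies in
range as soon as `2|γ| ≥ |a|`, either a letter is its own inverse or two cyclically adjacent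
letters cancel; the second is excluded because `a` is cyclically reduced.
-/

/-- A word over `β` is reduced if it has no two adjacent letters `(x, b)`, `(x, ¬b)`. -/
def Reduced {β : Type*} (w : List (β × Bool)) : Prop :=
  List.Chain' (fun a b => ¬ (a.1 = b.1 ∧ b.2 = !a.2)) w

/-- A word is cyclically reduced if it is reduced and, when nonempty, its last letter and
first letter are not of the form `(x, b)`, `(x, ¬b)`. -/
def CyclicallyReduced {β : Type*} (w : List (β × Bool)) : Prop :=
  Reduced w ∧ ∀ a ∈ w.getLast?, ∀ b ∈ w.head?, ¬ (a.1 = b.1 ∧ b.2 = !a.2)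

section Lists

variable {α : Type*}

theorem List.getElem_flatten_replicate (a : List α) (n t : ℕ)
    (ht : t < (replicate n a).flatten.length) :
    (replicate n a).flatten[t] =
      a[t % a.length]'(Nat.mod_lt _ (List.length_pos_iff.mpr (by rintro rfl; simp at ht))) := by
  induction n generalizing t with
  | zero => simp at ht
  | succ n ih =>
    simp only [replicate_succ, flatten_cons, getElem_append]
    split_ifs with h
    · simp only [Nat.mod_eq_of_lt h]
    · simp only [ih, Nat.mod_eq_sub_mod (not_lt.mp h)]

def cyclicLetter (a : List α) [NeZero a.length] (x : ZMod a.length) : α :=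
  a[x.val]'(ZMod.val_lt x)

theorem cyclicLetter_natCast (a : List α) [NeZero a.length] (t : ℕ) :
    cyclicLetter a t = a[t % a.length]'(Nat.mod_lt _ (NeZero.pos _)) := by
  simp only [cyclicLetter, ZMod.val_natCast]

theorem getElem_eq_cyclicLetter_of_flatten_replicate_eq {a u g v : List α} [NeZero a.length]
    {n : ℕ} (h : (List.replicate n a).flatten = u ++ g ++ v) {k : ℕ} (hk : k < g.length) :
    g[k] = cyclicLetter a (u.length + k) := by
  have hlt : u.length + k < (List.replicate n a).flatten.length := by
    simp only [h, List.length_append]; omega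
  rw [← Nat.cast_add, cyclicLetter_natCast, ← List.getElem_flatten_replicate _ _ _ hlt]
  simp [h, List.getElem_append_right, List.getElem_append_left, hk]

end Lists

section Letters

variable {β : Type*}

def invLetter (p : β × Bool) : β × Bool := (p.1, !p.2)

theorem invLetter_involutive : Function.Involutive (invLetter (β := β)) := by
  intro p; simp [invLetter]

theorem invLetter_ne_self (p : β × Bool) : invLetter p ≠ p := by
  simp [invLetter, Prod.ext_iff]

theorem eq_invLetter_iff {p q : β × Bool} : q = invLetter p ↔ p.1 = q.1 ∧ q.2 = !p.2 := by
  simp only [invLetter, Prod.ext_iff, eq_comm]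

theorem getElem_invRev (w : List (β × Bool)) {k : ℕ} (hk : k < (FreeGroup.invRev w).length) :
    (FreeGroup.invRev w)[k] = invLetter (w[w.length - 1 - k]'(by rw [FreeGroup.invRev_length] at hk; omega)) := by
  simp [FreeGroup.invRev, invLetter]

theorem CyclicallyReduced.isCyclicallyReduced {w : List (β × Bool)} (h : CyclicallyReduced w) :
    FreeGroup.IsCyclicallyReduced w := by
  have hrel {p q : β × Bool} (hpq : ¬(p.1 = q.1 ∧ q.2 = !p.2)) : p.1 = q.1 → p.2 = q.2 := by
    obtain ⟨x, b⟩ := p; obtain ⟨y, c⟩ := q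
    cases b <;> cases c <;> simp_all
  exact ⟨h.1.imp fun _ _ => hrel, fun p hp q hq => hrel (h.2 p hp q hq)⟩

theorem CyclicallyReduced.cyclicLetter_add_one_ne {a : List (β × Bool)} (ha : CyclicallyReduced a)
    [NeZero a.length] (x : ZMod a.length) :
    cyclicLetter a (x + 1) ≠ invLetter (cyclicLetter a x) := by
  obtain ⟨t, rfl⟩ := ZMod.natCast_zmod_surjective x
  have hred := (ha.isCyclicallyReduced.flatten_replicate 2).isReduced
  have hlt : t % a.length + 1 < (List.replicate 2 a).flatten.length := by
    have := Nat.mod_lt t (NeZero.pos a.length)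
    simp only [List.length_flatten, List.map_replicate, List.sum_replicate, smul_eq_mul]; omega
  have hstep := List.isChain_iff_getElem.mp hred (t % a.length) hlt
  simp only [List.getElem_flatten_replicate, Nat.mod_mod, Nat.mod_add_mod] at hstep
  rw [← Nat.cast_succ, cyclicLetter_natCast, cyclicLetter_natCast]
  intro heq
  obtain ⟨h1, h2⟩ := eq_invLetter_iff.mp heq
  simpa [h2] using hstep h1

end Letters

theorem two_mul_lt_of_reflected_segments {α : Type*} {L : ℕ} [NeZero L] {σ : α → α}
    (hσ : Function.Involutive σ) (hfix : ∀ x, σ x ≠ x) {g : ZMod L → α}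
    (hg : ∀ x, g (x + 1) ≠ σ (g x)) {j c : ZMod L} {l : ℕ}
    (hrefl : ∀ k < l, g (j + k) = σ (g (c - k))) : 2 * l < L := by
  by_contra! hle
  have hd : (c - j).val < L := ZMod.val_lt _
  have hcast : (((c - j).val : ℕ) : ZMod L) = c - j := ZMod.natCast_zmod_val _
  obtain ⟨k, hk | hk⟩ := Nat.even_or_odd' (c - j).val
  · have hmid : c - k = j + k := by
      rw [hk] at hcast; push_cast at hcast; linear_combination -hcast
    exact hfix _ (hmid ▸ hrefl k (by omega)).symm
  · have hmid : c - k = j + k + 1 := by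
      rw [hk] at hcast; push_cast at hcast; linear_combination -hcast
    refine hg (j + k) ?_
    rw [hrefl k (by omega), hmid, hσ]

theorem length_lt_half_of_factor_and_inv_factor_general {β : Type*} (a γ : List (β × Bool))
    (ha : CyclicallyReduced a) (hane : a ≠ [])
    (h1 : ∃ n : ℕ, 1 ≤ n ∧ ∃ u v, (List.replicate n a).flatten = u ++ γ ++ v)
    (h2 : ∃ m : ℕ, 1 ≤ m ∧ ∃ u v,
        (List.replicate m a).flatten = u ++ FreeGroup.invRev γ ++ v) :
    2 * γ.length < a.length := by
  have : NeZero a.length := ⟨by simpa using hane⟩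
  obtain ⟨n, -, u, v, hγ⟩ := h1
  obtain ⟨m, -, u', v', hγinv⟩ := h2
  refine two_mul_lt_of_reflected_segments invLetter_involutive invLetter_ne_self
    ha.cyclicLetter_add_one_ne (j := u'.length) (c := u.length + γ.length - 1) fun k hk => ?_
  rw [← getElem_eq_cyclicLetter_of_flatten_replicate_eq hγinv (by simpa), getElem_invRev,
    getElem_eq_cyclicLetter_of_flatten_replicate_eq hγ (by omega), Nat.sub_sub,
    Nat.cast_sub (by omega)]
  push_cast
  congr 2
  ring

/-- If a nonempty word `γ` is a factor of a power of a nonempty cyclically reduced word `a`,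
and its formal inverse `γ⁻¹` is a factor of a power of `a` as well,
then `2·|γ| < |a|`. -/
theorem length_lt_half_of_factor_and_inv_factor {β : Type*} (a γ : List (β × Bool))
    (ha : CyclicallyReduced a) (hane : a ≠ []) (hγ : γ ≠ [])
    (h1 : ∃ n : ℕ, 1 ≤ n ∧ ∃ u v, (List.replicate n a).flatten = u ++ γ ++ v)
    (h2 : ∃ m : ℕ, 1 ≤ m ∧ ∃ u v,
        (List.replicate m a).flatten = u ++ FreeGroup.invRev γ ++ v) :
    2 * γ.length < a.length :=
  length_lt_half_of_factor_and_inv_factor_general a γ ha hane h1 h2
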